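/- Let V(λ, q) = (3q + (1−q)·(7λ−1)/(1−λ)) / (1 − qλ). Then V(2/3, 3/4) + V(1/3, 3/4) = 41/3, V(2/3, 1) + V(1/3, 1) = 27/2, and V(2/3, 0) + V(1/3, 0) = 13; in particular 41/3 > 27/2 > 13, so the mixed stationary strategy with q = 3/4 achieves strictly higher social welfare than either pure positional strategy. -/
import Mathlib

/-- Expected discounted payoff, for a principal with discount factor `lam`, of
the stationary strategy taking action `a` with probability `q` in state `s₀`. -/
noncomputable def V (lam q : ℝ) : ℝ :=
  (3 * q + (1 - q) * (7 * lam - 1) / (1 - lam)) / (1 - q * lam)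

/-- The mixed stationary strategy with `q = 3/4` achieves social welfare `41/3`,
strictly above both pure positional strategies (`q = 1` gives `27/2`,
`q = 0` gives `13`). -/
theorem mixed_beats_pure_positional :
    V (2/3) (3/4) + V (1/3) (3/4) = 41/3 ∧
    V (2/3) 1 + V (1/3) 1 = 27/2 ∧
    V (2/3) 0 + V (1/3) 0 = 13 ∧
    (41/3 : ℝ) > 27/2 ∧ (27/2 : ℝ) > 13 := by
  refine ⟨?_, ?_, ?_, by norm_num, by norm_num⟩ <;> simp [V] <;> norm_num
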